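/- For a real n×n matrix A, let [A]_k denote the k-th elementary symmetric function of the eigenvalues and [A]_k^{lm} := ∂[A]_k/∂a_{lm}. Then for every three times continuously differentiable function u : ℝⁿ → ℝ, every k ∈ {0,…,n} and every x ∈ ℝⁿ, one has ∑_{m=1}^{n} ∂/∂x_m ( ∑_{l=1}^{n} [D²u(x)]_k^{lm} ∂u/∂x_l (x) ) = k · [D²u(x)]_k, where D²u(x) denotes the Hessian matrix of u at x. -/

import Mathlib

open Filter Topology MeasureTheory Set

noncomputable section

abbrev En (n : ℕ) : Type := EuclideanSpace ℝ (Fin n)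

/-- Super-coercive, convex, lower semicontinuous, proper function on `ℝⁿ` with values in
`ℝ ∪ {+∞}` (modelled as `EReal`). -/
def IsConvSc {n : ℕ} (u : En n → EReal) : Prop :=
  (∀ x y : En n, ∀ t : ℝ, 0 ≤ t → t ≤ 1 →
      u ((1 - t) • x + t • y) ≤ ((1 - t : ℝ) : EReal) * u x + ((t : ℝ) : EReal) * u y) ∧
  LowerSemicontinuous u ∧
  (∃ x, u x ≠ ⊤) ∧
  (∀ C : ℝ, ∃ R : ℝ, ∀ x : En n, R ≤ ‖x‖ → ((C * ‖x‖ : ℝ) : EReal) ≤ u x)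

/-- Epi-convergence of a sequence of `EReal`-valued functions. -/
def EpiConvergesTo {n : ℕ} (uk : ℕ → En n → EReal) (u : En n → EReal) : Prop :=
  (∀ x : En n, ∀ xk : ℕ → En n, Tendsto xk atTop (𝓝 x) →
      u x ≤ Filter.liminf (fun k => uk k (xk k)) atTop) ∧
  (∀ x : En n, ∃ xk : ℕ → En n, Tendsto xk atTop (𝓝 x) ∧
      Tendsto (fun k => uk k (xk k)) atTop (𝓝 (u x)))

/-- Sequential continuity of a functional on `Conv_sc(ℝⁿ)` with respect to epi-convergence. -/
def ContinuousValSc {n : ℕ} (Z : (En n → EReal) → ℝ) : Prop :=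
  ∀ (uk : ℕ → En n → EReal) (u : En n → EReal),
    (∀ k, IsConvSc (uk k)) → IsConvSc u → EpiConvergesTo uk u →
      Tendsto (fun k => Z (uk k)) atTop (𝓝 (Z u))

/-- Valuation property on `Conv_sc(ℝⁿ)`. -/
def IsValuationSc {n : ℕ} (Z : (En n → EReal) → ℝ) : Prop :=
  ∀ u v : En n → EReal, IsConvSc u → IsConvSc v → IsConvSc (u ⊔ v) → IsConvSc (u ⊓ v) →
    Z u + Z v = Z (u ⊔ v) + Z (u ⊓ v)

/-- Epi-translation invariance on `Conv_sc(ℝⁿ)`. -/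
def EpiTranslInvSc {n : ℕ} (Z : (En n → EReal) → ℝ) : Prop :=
  ∀ u : En n → EReal, IsConvSc u → ∀ (x₀ : En n) (c : ℝ),
    Z (fun x => u (x - x₀) + (c : EReal)) = Z u

/-- A rotation of `ℝⁿ`: a linear isometry with determinant one. -/
def IsRotation {n : ℕ} (ϑ : En n ≃ₗᵢ[ℝ] En n) : Prop :=
  LinearMap.det (ϑ.toLinearEquiv : En n →ₗ[ℝ] En n) = 1

/-- Rotation invariance on `Conv_sc(ℝⁿ)`. -/
def RotInvSc {n : ℕ} (Z : (En n → EReal) → ℝ) : Prop :=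
  ∀ u : En n → EReal, IsConvSc u → ∀ ϑ : En n ≃ₗᵢ[ℝ] En n, IsRotation ϑ →
    Z (fun x => u (ϑ.symm x)) = Z u

/-- The Hessian matrix of `f : ℝⁿ → ℝ` at `x`. -/
def hessMat {n : ℕ} (f : En n → ℝ) (x : En n) : Matrix (Fin n) (Fin n) ℝ :=
  Matrix.of fun i j =>
    fderiv ℝ (fun y => fderiv ℝ f y (EuclideanSpace.single j (1 : ℝ))) x
      (EuclideanSpace.single i (1 : ℝ))

/-- `[A]ₖ`, the `k`-th elementary symmetric function of the eigenvalues of an `n × n` matrix,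
expressed via the characteristic polynomial; `[A]₀ = 1`. -/
def esymmMat {n : ℕ} (A : Matrix (Fin n) (Fin n) ℝ) (k : ℕ) : ℝ :=
  (-1 : ℝ) ^ k * (Matrix.charpoly A).coeff (n - k)

/-- The class `Had_j^n` of singular densities. -/
def HadClass (n j : ℕ) (ζ : ℝ → ℝ) : Prop :=
  ContinuousOn ζ (Set.Ioi 0) ∧ (∃ R : ℝ, 0 < R ∧ ∀ s : ℝ, R ≤ s → ζ s = 0) ∧
  (if j = n then
      Tendsto ζ (𝓝[>] (0 : ℝ)) (𝓝 (ζ 0))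
    else if j = 0 then
      ∃ L : ℝ, Tendsto (fun s : ℝ => ∫ t in Set.Ioi s, t ^ (n - 1) * ζ t) (𝓝[>] (0 : ℝ)) (𝓝 L)
    else
      Tendsto (fun s : ℝ => s ^ (n - j) * ζ s) (𝓝[>] (0 : ℝ)) (𝓝 0) ∧
      ∃ L : ℝ, Tendsto (fun s : ℝ => ∫ t in Set.Ioi s, t ^ (n - j - 1) * ζ t)
        (𝓝[>] (0 : ℝ)) (𝓝 L))

/-- `Z(u) = ∫ ζ(|∇u|)[D²u]_{n-j} dx` on smooth strictly convex functions in `Conv_sc(ℝⁿ)`. -/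
def HessFormulaSc {n : ℕ} (Z : (En n → EReal) → ℝ) (ζ : ℝ → ℝ) (j : ℕ) : Prop :=
  ∀ f : En n → ℝ, IsConvSc (fun x => (f x : EReal)) → ContDiff ℝ 2 f →
    (∀ x, (hessMat f x).PosDef) →
    Z (fun x => (f x : EReal)) = ∫ x : En n, ζ ‖gradient f x‖ * esymmMat (hessMat f x) (n - j)

/-- Epi-multiplication `(λ ⌑ u)(x) = λ u(x/λ)`. -/
def epiSmul {n : ℕ} (lam : ℝ) (u : En n → EReal) : En n → EReal :=
  fun x => (lam : EReal) * u (lam⁻¹ • x)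

/-- Sequential continuity of a functional on `Conv(ℝⁿ;ℝ)` with respect to uniform convergence
on compact sets. -/
def ContinuousValFin {n : ℕ} (Z : (En n → ℝ) → ℝ) : Prop :=
  ∀ (vk : ℕ → En n → ℝ) (v : En n → ℝ),
    (∀ k, ConvexOn ℝ Set.univ (vk k)) → ConvexOn ℝ Set.univ v →
    (∀ K : Set (En n), IsCompact K → TendstoUniformlyOn vk v atTop K) →
      Tendsto (fun k => Z (vk k)) atTop (𝓝 (Z v))

/-- Valuation property on `Conv(ℝⁿ;ℝ)`. -/
def IsValuationFin {n : ℕ} (Z : (En n → ℝ) → ℝ) : Prop :=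
  ∀ u v : En n → ℝ, ConvexOn ℝ Set.univ u → ConvexOn ℝ Set.univ v →
    ConvexOn ℝ Set.univ (u ⊔ v) → ConvexOn ℝ Set.univ (u ⊓ v) →
    Z u + Z v = Z (u ⊔ v) + Z (u ⊓ v)

/-- Dual epi-translation invariance: invariance under addition of linear functions and
constants. -/
def DualEpiTranslInv {n : ℕ} (Z : (En n → ℝ) → ℝ) : Prop :=
  ∀ v : En n → ℝ, ConvexOn ℝ Set.univ v → ∀ (y : En n) (c : ℝ),
    Z (fun x => v x + (inner ℝ y x : ℝ) + c) = Z v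

/-- Rotation invariance on `Conv(ℝⁿ;ℝ)`. -/
def RotInvFin {n : ℕ} (Z : (En n → ℝ) → ℝ) : Prop :=
  ∀ v : En n → ℝ, ConvexOn ℝ Set.univ v → ∀ ϑ : En n ≃ₗᵢ[ℝ] En n, IsRotation ϑ →
    Z (fun x => v (ϑ.symm x)) = Z v

/-- `Z(v) = ∫ ζ(|x|)[D²v]_j dx` on smooth strictly convex functions in `Conv(ℝⁿ;ℝ)`. -/
def HessFormulaFin {n : ℕ} (Z : (En n → ℝ) → ℝ) (ζ : ℝ → ℝ) (j : ℕ) : Prop :=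
  ∀ v : En n → ℝ, ConvexOn ℝ Set.univ v → ContDiff ℝ 2 v →
    (∀ x, (hessMat v x).PosDef) →
    Z v = ∫ x : En n, ζ ‖x‖ * esymmMat (hessMat v x) j

/-- `[A]ₖ^{lm}`: the partial derivative of `A ↦ [A]ₖ` with respect to the `(l,m)` entry. -/
def esymmEntryDeriv {n : ℕ} (k : ℕ) (l m : Fin n) (A : Matrix (Fin n) (Fin n) ℝ) : ℝ :=
  deriv (fun s : ℝ => esymmMat (A + s • Matrix.single l m (1 : ℝ)) k) 0

/-!
Expanding in principal minors, `[A]_k = ∑_{|s| = k} det (s.piecewise A 1)`, the determinant of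
the matrix that takes its rows indexed by `s` from `A` and its other rows from the identity.
Differentiating in `a_{lm}` replaces row `l` by the unit row `e_m`, so `[A]_k^{lm}` is a sum of
determinants of the same kind, and the product rule splits the divergence into a term with second
and a term with third derivatives of `u`. Expanding along row `l` gives Euler's identity
`∑_{l,m} a_{lm} [A]_k^{lm} = k [A]_k` for the first term. In the second, for fixed `l` and `p`, the
coefficients `∂_m ∂_p ∂_q u`, symmetric in `(m, q)`, multiply determinants with rows `e_m` and `e_q`
in positions `l` and `p`, which are antisymmetric in `(m, q)`; so it vanishes (the Piola identity
for cofactors).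
-/

namespace Matrix

variable {ι : Type*} [DecidableEq ι]

section Piecewise

variable {α : Type*} {s : Finset ι} {i : ι}

theorem of_piecewise_updateRow (hi : i ∉ s) (C A : Matrix ι ι α) (v : ι → α) :
    of (s.piecewise A (C.updateRow i v)) = (of (s.piecewise A C)).updateRow i v := by
  ext j k
  simp only [Finset.piecewise, updateRow_apply, of_apply]
  split_ifs <;> simp_all

theorem of_erase_piecewise_updateRow (hi : i ∈ s) (C A : Matrix ι ι α) (v : ι → α) :
    of ((s.erase i).piecewise A (C.updateRow i v)) = (of (s.piecewise A C)).updateRow i v := by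
  ext j k
  simp only [Finset.piecewise, updateRow_apply, of_apply, Finset.mem_erase]
  split_ifs <;> simp_all

end Piecewise

variable [Fintype ι] {R : Type*} [CommRing R]

theorem det_updateRow_eq_sum_mul_det_updateRow_single (M : Matrix ι ι R) (i : ι) (v : ι → R) :
    (M.updateRow i v).det = ∑ j, v j * (M.updateRow i (Pi.single j 1)).det := by
  simp [det_eq_sum_mul_adjugate_row (M.updateRow i v) i, adjugate_apply]

theorem sum_det_updateRow_single_updateRow_eq_zero (N : Matrix ι ι R) {l p : ι} (hlp : l ≠ p)
    (T : Matrix ι ι R) (hT : T.IsSymm) :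
    ∑ m, ((N.updateRow l (Pi.single m 1)).updateRow p (T m)).det = 0 := by
  set D : ι × ι → R := fun mq =>
    T mq.1 mq.2 * ((N.updateRow l (Pi.single mq.1 1)).updateRow p (Pi.single mq.2 1)).det
  have hD_swap : ∀ mq, D mq + D mq.swap = 0 := by
    rintro ⟨m, q⟩
    have hswap : (N.updateRow l (Pi.single q 1)).updateRow p (Pi.single m 1) =
        ((N.updateRow l (Pi.single m 1)).updateRow p (Pi.single q 1)).submatrix
          (Equiv.swap l p) id := by
      ext i j
      rcases eq_or_ne i l with rfl | hil
      · simp [updateRow_apply, hlp]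
      rcases eq_or_ne i p with rfl | hip
      · simp [updateRow_apply, hlp]
      · simp [updateRow_apply, hil, hip, Equiv.swap_apply_of_ne_of_ne hil hip]
    simp only [D, Prod.fst_swap, Prod.snd_swap, hT.apply q m, hswap, det_permute,
      Equiv.Perm.sign_swap hlp]
    simp
  have hD_diag : ∀ mq : ι × ι, D mq ≠ 0 → mq.swap ≠ mq := by
    rintro ⟨m, q⟩ hD h
    obtain rfl : q = m := congrArg Prod.fst h
    refine hD (mul_eq_zero_of_right _ (det_zero_of_row_eq hlp ?_))
    simp [hlp]
  calc ∑ m, ((N.updateRow l (Pi.single m 1)).updateRow p (T m)).det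
      = ∑ mq : ι × ι, D mq := by
        simp only [det_updateRow_eq_sum_mul_det_updateRow_single _ p (T _),
          Fintype.sum_prod_type, D]
    _ = 0 := Finset.sum_ninvolution Prod.swap hD_swap hD_diag (fun _ => Finset.mem_univ _)
        Prod.swap_swap

def detPiecewise (s : Finset ι) (C A : Matrix ι ι R) : R :=
  (of (s.piecewise A C)).det

theorem detPiecewise_updateRow_zero {s : Finset ι} {i : ι} (hi : i ∉ s) (C A : Matrix ι ι R) :
    detPiecewise s (C.updateRow i 0) A = 0 := by
  rw [detPiecewise, of_piecewise_updateRow hi]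
  exact det_eq_zero_of_row_eq_zero i fun j => by simp

theorem sum_mul_detPiecewise_erase_updateRow_single {s : Finset ι} {i : ι} (hi : i ∈ s)
    (C A : Matrix ι ι R) :
    ∑ j, A i j * detPiecewise (s.erase i) (C.updateRow i (Pi.single j 1)) A =
      detPiecewise s C A := by
  simp only [detPiecewise, of_erase_piecewise_updateRow hi]
  rw [← det_updateRow_eq_sum_mul_det_updateRow_single]
  have hrow : of (s.piecewise A C) i = A i := Finset.piecewise_eq_of_mem _ _ _ hi
  rw [← hrow, updateRow_eq_self]

end Matrix

section Calculus

-- This norm is definitionally the sup norm of `ι → ι → 𝕜`, so facts stated for `Pi` types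
-- transfer to matrices by `exact`.
attribute [local instance] Matrix.normedAddCommGroup Matrix.normedSpace

namespace Matrix

variable {ι 𝕜 : Type*} [Fintype ι] [DecidableEq ι] [NontriviallyNormedField 𝕜]

def detRowContinuousMultilinear : ContinuousMultilinearMap 𝕜 (fun _ : ι => ι → 𝕜) 𝕜 :=
  ⟨detRowAlternating.toMultilinearMap, continuous_id.matrix_det⟩

theorem differentiable_det : Differentiable 𝕜 (det : Matrix ι ι 𝕜 → 𝕜) := fun M =>
  (detRowContinuousMultilinear.hasFDerivAt M).differentiableAt

theorem fderiv_det_apply (M V : Matrix ι ι 𝕜) :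
    fderiv 𝕜 (det : Matrix ι ι 𝕜 → 𝕜) M V = ∑ i, (M.updateRow i (V i)).det :=
  (congrArg (· V) (detRowContinuousMultilinear.hasFDerivAt M).fderiv).trans
    (detRowContinuousMultilinear.linearDeriv_apply M V)

theorem differentiable_of_piecewise (s : Finset ι) (C : Matrix ι ι 𝕜) :
    Differentiable 𝕜 fun A : Matrix ι ι 𝕜 => of (s.piecewise A C) := by
  have : Differentiable 𝕜 fun A : ι → ι → 𝕜 => s.piecewise A C := by
    refine differentiable_pi.2 fun i => ?_
    by_cases hi : i ∈ s
    · simpa only [Finset.piecewise, hi, if_true] using differentiable_apply (𝕜 := 𝕜) i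
    · simp only [Finset.piecewise, hi, if_false]
      exact differentiable_const _
  exact this

theorem differentiable_detPiecewise (s : Finset ι) (C : Matrix ι ι 𝕜) :
    Differentiable 𝕜 (detPiecewise s C) :=
  differentiable_det.comp (differentiable_of_piecewise s C)

theorem fderiv_detPiecewise_apply (s : Finset ι) (C A V : Matrix ι ι 𝕜) :
    fderiv 𝕜 (detPiecewise s C) A V =
      ∑ p ∈ s, detPiecewise (s.erase p) (C.updateRow p (V p)) A := by
  set N := of (s.piecewise A C)
  set W : Matrix ι ι 𝕜 := of fun i => if i ∈ s then V i else 0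
  have hline : (fun t : 𝕜 => detPiecewise s C (A + t • V)) = fun t => (N + t • W).det := by
    ext t
    simp only [detPiecewise, N, W]
    congr 1
    ext i j
    by_cases hi : i ∈ s <;> simp [Finset.piecewise, hi]
  calc fderiv 𝕜 (detPiecewise s C) A V = lineDeriv 𝕜 (detPiecewise s C) A V :=
        (differentiable_detPiecewise s C A).lineDeriv_eq_fderiv.symm
    _ = lineDeriv 𝕜 det N W := by rw [lineDeriv, lineDeriv, hline]
    _ = fderiv 𝕜 det N W := (differentiable_det N).lineDeriv_eq_fderiv
    _ = ∑ p ∈ s, detPiecewise (s.erase p) (C.updateRow p (V p)) A := by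
      rw [fderiv_det_apply, ← Finset.sum_subset (Finset.subset_univ s)]
      · refine Finset.sum_congr rfl fun p hp => ?_
        rw [detPiecewise, of_erase_piecewise_updateRow hp, show W p = V p from if_pos hp]
      · intro i _ hi
        refine det_eq_zero_of_row_eq_zero i fun j => ?_
        rw [updateRow_self, show W i = 0 from if_neg hi, Pi.zero_apply]

theorem sum_fderiv_detPiecewise_updateRow_single_eq_zero {s : Finset ι} {l : ι} (hl : l ∉ s)
    (C A : Matrix ι ι 𝕜) (T : ι → Matrix ι ι 𝕜) (hT : ∀ p, (of fun m q => T m p q).IsSymm) :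
    ∑ m, fderiv 𝕜 (detPiecewise s (C.updateRow l (Pi.single m 1))) A (T m) = 0 := by
  simp only [fderiv_detPiecewise_apply]
  rw [Finset.sum_comm]
  refine Finset.sum_eq_zero fun p hp => ?_
  have hl' : l ∉ s.erase p := fun h => hl (Finset.mem_of_mem_erase h)
  simp only [detPiecewise, of_piecewise_updateRow (s.notMem_erase p), of_piecewise_updateRow hl']
  exact sum_det_updateRow_single_updateRow_eq_zero _ (ne_of_mem_of_not_mem hp hl).symm _ (hT p)

end Matrix

open Matrix

section Esymm

variable {n k : ℕ}

theorem esymmMat_eq_sum_detPiecewise (hk : k ≤ n) (A : Matrix (Fin n) (Fin n) ℝ) :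
    esymmMat A k = ∑ s ∈ Finset.univ.powersetCard k, detPiecewise s 1 A := by
  have h := charpoly_coeff_eq_sum_minors A k (by simpa using hk)
  rw [Fintype.card_fin] at h
  rw [esymmMat, h, ← mul_assoc, ← mul_pow, neg_one_mul, neg_neg, one_pow, one_mul]
  exact Finset.sum_congr rfl fun s _ => (det_piecewise_one_eq_submatrix_det A s).symm

theorem esymmEntryDeriv_eq_sum (hk : k ≤ n) (l m : Fin n) :
    esymmEntryDeriv k l m = fun A => ∑ s ∈ Finset.univ.powersetCard k with l ∈ s,
      detPiecewise (s.erase l) (updateRow 1 l (Pi.single m 1)) A := by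
  funext A
  have hrow : ∀ s : Finset (Fin n), ∀ p ∈ s,
      detPiecewise (s.erase p) (updateRow 1 p (single l m (1 : ℝ) p)) A =
        if p = l then detPiecewise (s.erase l) (updateRow 1 l (Pi.single m 1)) A else 0 := by
    intro s p _
    split_ifs with hpl
    · subst hpl
      congr 3
      ext j
      simp [single_apply, Pi.single_apply, eq_comm]
    · have : single l m (1 : ℝ) p = 0 := by ext j; simp [Ne.symm hpl]
      rw [this, detPiecewise_updateRow_zero (s.notMem_erase p)]
  have hF : HasFDerivAt (fun A => esymmMat A k)
      (∑ s ∈ Finset.univ.powersetCard k, fderiv ℝ (detPiecewise s 1) A) A := by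
    simp only [esymmMat_eq_sum_detPiecewise hk]
    exact HasFDerivAt.fun_sum fun s _ => (differentiable_detPiecewise s 1 A).hasFDerivAt
  -- `esymmEntryDeriv k l m A` is by definition `lineDeriv ℝ (esymmMat · k) A (single l m 1)`.
  calc esymmEntryDeriv k l m A
      = fderiv ℝ (fun A => esymmMat A k) A (single l m 1) :=
        hF.differentiableAt.lineDeriv_eq_fderiv
    _ = ∑ s ∈ Finset.univ.powersetCard k, fderiv ℝ (detPiecewise s 1) A (single l m 1) := by
        rw [hF.fderiv, _root_.sum_apply]
    _ = _ := by
        simp only [fderiv_detPiecewise_apply]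
        rw [Finset.sum_filter]
        refine Finset.sum_congr rfl fun s _ => ?_
        rw [Finset.sum_congr rfl (hrow s), Finset.sum_ite_eq']

theorem differentiable_esymmEntryDeriv (hk : k ≤ n) (l m : Fin n) :
    Differentiable ℝ (esymmEntryDeriv k l m) := by
  rw [esymmEntryDeriv_eq_sum hk]
  exact Differentiable.fun_sum fun s _ => differentiable_detPiecewise _ _

theorem sum_sum_mul_esymmEntryDeriv (hk : k ≤ n) (A : Matrix (Fin n) (Fin n) ℝ) :
    ∑ l, ∑ m, A l m * esymmEntryDeriv k l m A = k * esymmMat A k := by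
  simp only [esymmEntryDeriv_eq_sum hk, Finset.mul_sum]
  calc _ = ∑ l, ∑ s ∈ Finset.univ.powersetCard k with l ∈ s, ∑ m,
        A l m * detPiecewise (s.erase l) (updateRow 1 l (Pi.single m 1)) A :=
        Finset.sum_congr rfl fun l _ => Finset.sum_comm
    _ = ∑ l, ∑ s ∈ Finset.univ.powersetCard k with l ∈ s, detPiecewise s 1 A :=
        Finset.sum_congr rfl fun l _ => Finset.sum_congr rfl fun s hs =>
          sum_mul_detPiecewise_erase_updateRow_single (Finset.mem_filter.1 hs).2 1 A
    _ = ∑ s ∈ Finset.univ.powersetCard k, ∑ l ∈ s, detPiecewise s 1 A :=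
        Finset.sum_comm' fun l s => by simp [and_comm]
    _ = k * esymmMat A k := by
        rw [esymmMat_eq_sum_detPiecewise hk, Finset.mul_sum]
        refine Finset.sum_congr rfl fun s hs => ?_
        rw [Finset.sum_const, (Finset.mem_powersetCard.1 hs).2, nsmul_eq_mul]

theorem sum_fderiv_esymmEntryDeriv_eq_zero (hk : k ≤ n) (l : Fin n)
    (A : Matrix (Fin n) (Fin n) ℝ) (T : Fin n → Matrix (Fin n) (Fin n) ℝ)
    (hT : ∀ p, (of fun m q => T m p q).IsSymm) :
    ∑ m, fderiv ℝ (esymmEntryDeriv k l m) A (T m) = 0 := by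
  have hsum : ∀ m, HasFDerivAt (esymmEntryDeriv k l m)
      (∑ s ∈ Finset.univ.powersetCard k with l ∈ s,
        fderiv ℝ (detPiecewise (s.erase l) (updateRow 1 l (Pi.single m 1))) A) A := by
    intro m
    rw [esymmEntryDeriv_eq_sum hk]
    exact HasFDerivAt.fun_sum fun s _ => (differentiable_detPiecewise _ _ A).hasFDerivAt
  simp only [(hsum _).fderiv, _root_.sum_apply]
  rw [Finset.sum_comm]
  exact Finset.sum_eq_zero fun s _ =>
    sum_fderiv_detPiecewise_updateRow_single_eq_zero (s.notMem_erase l) 1 A T hT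

end Esymm

section Hessian

variable {E : Type*} [NormedAddCommGroup E] [NormedSpace ℝ E]

theorem fderiv_fderiv_apply_comm {F : Type*} [NormedAddCommGroup F] [NormedSpace ℝ F]
    {f : E → F} {x : E} (hf : ContDiffAt ℝ 2 f x) (v w : E) :
    fderiv ℝ (fun y => fderiv ℝ f y w) x v = fderiv ℝ (fun y => fderiv ℝ f y v) x w := by
  have hd : DifferentiableAt ℝ (fderiv ℝ f) x :=
    (hf.fderiv_right (m := 1) le_rfl).differentiableAt one_ne_zero
  rw [fderiv_clm_apply hd (differentiableAt_const w), fderiv_clm_apply hd (differentiableAt_const v)]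
  simpa using (hf.isSymmSndFDerivAt (by simp)).eq v w

theorem ContDiff.fderiv_apply_const {F : Type*} [NormedAddCommGroup F] [NormedSpace ℝ F]
    {f : E → F} {m k : WithTop ℕ∞} (hf : ContDiff ℝ k f) (hmk : m + 1 ≤ k) (v : E) :
    ContDiff ℝ m fun y => fderiv ℝ f y v :=
  (hf.fderiv_right hmk).clm_apply contDiff_const

theorem fderiv_matrix_apply {m n : Type*} [Fintype m] [Fintype n] {f : E → Matrix m n ℝ} {x : E}
    (hf : DifferentiableAt ℝ f x) (v : E) (i : m) (j : n) :
    fderiv ℝ f x v i j = fderiv ℝ (fun y => f y i j) x v := by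
  have hf' : DifferentiableAt ℝ (fun y => (f y : m → n → ℝ)) x := hf
  rw [fderiv_apply (differentiableAt_pi.1 hf' i), fderiv_apply hf']
  rfl

variable {n : ℕ} {u : En n → ℝ}

theorem hessMat_isSymm (hu : ContDiff ℝ 2 u) (x : En n) : (hessMat u x).IsSymm :=
  IsSymm.ext fun _ _ => fderiv_fderiv_apply_comm hu.contDiffAt _ _

theorem differentiable_hessMat (hu : ContDiff ℝ 3 u) : Differentiable ℝ (hessMat u) := by
  have : Differentiable ℝ fun y => (hessMat u y : Fin n → Fin n → ℝ) := by
    refine differentiable_pi.2 fun i => differentiable_pi.2 fun j => ?_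
    exact ((hu.fderiv_apply_const (m := 2) (by norm_num) _).fderiv_apply_const (m := 1)
      (by norm_num) _).differentiable one_ne_zero
  exact this

theorem isSymm_fderiv_hessMat (hu : ContDiff ℝ 3 u) (x : En n) (p : Fin n) :
    (of fun m q => fderiv ℝ (hessMat u) x (EuclideanSpace.single m 1) p q).IsSymm := by
  set T : Fin n → Fin n → Fin n → ℝ := fun m p q =>
    fderiv ℝ (fun y => hessMat u y p q) x (EuclideanSpace.single m 1)
  have hT : ∀ m p q, fderiv ℝ (hessMat u) x (EuclideanSpace.single m 1) p q = T m p q :=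
    fun m p q => fderiv_matrix_apply (differentiable_hessMat hu x) _ _ _
  have h23 : ∀ m p q, T m p q = T m q p := fun m p q => by
    simp only [T, (hessMat_isSymm (hu.of_le (by norm_num)) _).apply p q]
  have h12 : ∀ m p q, T m p q = T p m q := fun m p q =>
    fderiv_fderiv_apply_comm ((hu.fderiv_apply_const (m := 2) (by norm_num) _).contDiffAt) _ _
  refine IsSymm.ext fun m q => ?_
  simp only [of_apply, hT]
  rw [h23, h12, h23]

theorem sum_fderiv_sum_comp_hessMat_mul (hu : ContDiff ℝ 3 u)
    {G : Fin n → Fin n → Matrix (Fin n) (Fin n) ℝ → ℝ} (hG : ∀ l m, Differentiable ℝ (G l m))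
    (x : En n) :
    ∑ m, fderiv ℝ (fun y => ∑ l, G l m (hessMat u y) * fderiv ℝ u y (EuclideanSpace.single l 1))
        x (EuclideanSpace.single m 1) =
      ∑ l, fderiv ℝ u x (EuclideanSpace.single l 1) *
          ∑ m, fderiv ℝ (G l m) (hessMat u x) (fderiv ℝ (hessMat u) x (EuclideanSpace.single m 1)) +
        ∑ l, ∑ m, hessMat u x l m * G l m (hessMat u x) := by
  have hpartial : ∀ l, DifferentiableAt ℝ (fun y => fderiv ℝ u y (EuclideanSpace.single l 1)) x :=
    fun l => (hu.fderiv_apply_const (m := 2) (by norm_num) _).differentiable (by norm_num) x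
  have hterm : ∀ m, fderiv ℝ
      (fun y => ∑ l, G l m (hessMat u y) * fderiv ℝ u y (EuclideanSpace.single l 1)) x
        (EuclideanSpace.single m 1) =
      ∑ l, (fderiv ℝ (G l m) (hessMat u x) (fderiv ℝ (hessMat u) x (EuclideanSpace.single m 1)) *
        fderiv ℝ u x (EuclideanSpace.single l 1) + G l m (hessMat u x) * hessMat u x m l) := by
    intro m
    have h : HasFDerivAt
        (fun y => ∑ l, G l m (hessMat u y) * fderiv ℝ u y (EuclideanSpace.single l 1)) _ x :=
      HasFDerivAt.fun_sum fun l _ =>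
      (((hG l m) _).hasFDerivAt.comp x (differentiable_hessMat hu x).hasFDerivAt).mul
        (hpartial l).hasFDerivAt
    rw [h.fderiv]
    simp only [_root_.sum_apply, _root_.add_apply, _root_.smul_apply,
      Function.comp_apply, smul_eq_mul]
    refine Finset.sum_congr rfl fun l _ => ?_
    rw [add_comm, mul_comm (fderiv ℝ u x _)]
    rfl
  simp only [hterm, Finset.sum_add_distrib, Finset.mul_sum]
  rw [Finset.sum_comm, Finset.sum_comm (f := fun m l => G l m (hessMat u x) * hessMat u x m l)]
  congr 1
  · simp only [mul_comm]
  · simp only [(hessMat_isSymm (hu.of_le (by norm_num)) x).apply, mul_comm]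

end Hessian

end Calculus

/-- `div_m([D²u]ₖ^{lm} u_l) = k [D²u]ₖ` for `u ∈ C³(ℝⁿ)`. -/
theorem stmt15 (n : ℕ) (u : En n → ℝ) (hu : ContDiff ℝ 3 u) (k : ℕ) (hk : k ≤ n) (x : En n) :
    ∑ m : Fin n,
      fderiv ℝ
        (fun y => ∑ l : Fin n,
          esymmEntryDeriv k l m (hessMat u y) * fderiv ℝ u y (EuclideanSpace.single l (1 : ℝ)))
        x (EuclideanSpace.single m (1 : ℝ))
      = (k : ℝ) * esymmMat (hessMat u x) k := by
  rw [sum_fderiv_sum_comp_hessMat_mul hu (G := fun l m => esymmEntryDeriv k l m)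
    fun l m => differentiable_esymmEntryDeriv hk l m]
  simp only [sum_fderiv_esymmEntryDeriv_eq_zero hk _ _ _ (isSymm_fderiv_hessMat hu x), mul_zero,
    Finset.sum_const_zero, zero_add]
  exact sum_sum_mul_esymmEntryDeriv hk _
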